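/- If H is an isometric subgraph of a connected graph G and X is a total general position set of G, then X ∩ V(H) is a total general position set of H. -/

import Mathlib

open SimpleGraph

/-- `u` and `v` are `X`-positionable in `G`: every shortest `u,v`-path meets `X`
only possibly in its endpoints. -/
def Positionable {V : Type*} (G : SimpleGraph V) (X : Set V) (u v : V) : Prop :=
  ∀ p : G.Walk u v, p.length = G.dist u v → ∀ w ∈ p.support, w ∈ X → w = u ∨ w = v

/-- `X` is a general position set of `G`. -/
def IsGPSet {V : Type*} (G : SimpleGraph V) (X : Set V) : Prop :=
  ∀ u ∈ X, ∀ v ∈ X, Positionable G X u v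

/-- `X` is an outer general position set of `G`. -/
def IsOuterGPSet {V : Type*} (G : SimpleGraph V) (X : Set V) : Prop :=
  IsGPSet G X ∧ ∀ u ∈ X, ∀ v ∉ X, Positionable G X u v

/-- `X` is a dual general position set of `G`. -/
def IsDualGPSet {V : Type*} (G : SimpleGraph V) (X : Set V) : Prop :=
  IsGPSet G X ∧ ∀ u ∉ X, ∀ v ∉ X, Positionable G X u v

/-- `X` is a total general position set of `G`. -/
def IsTotalGPSet {V : Type*} (G : SimpleGraph V) (X : Set V) : Prop :=
  ∀ u v : V, Positionable G X u v

/-- The outer general position number. -/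
noncomputable def gpo {V : Type*} (G : SimpleGraph V) : ℕ :=
  sSup {n | ∃ X : Set V, IsOuterGPSet G X ∧ X.ncard = n}

/-- The dual general position number. -/
noncomputable def gpd {V : Type*} (G : SimpleGraph V) : ℕ :=
  sSup {n | ∃ X : Set V, IsDualGPSet G X ∧ X.ncard = n}

/-- The total general position number. -/
noncomputable def gpt {V : Type*} (G : SimpleGraph V) : ℕ :=
  sSup {n | ∃ X : Set V, IsTotalGPSet G X ∧ X.ncard = n}

/-- The closed neighborhood `N[u]`. -/
def closedNbhd {V : Type*} (G : SimpleGraph V) (u : V) : Set V :=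
  insert u (G.neighborSet u)

/-- A vertex is simplicial if its closed neighborhood induces a complete subgraph. -/
def IsSimplicial {V : Type*} (G : SimpleGraph V) (u : V) : Prop :=
  ∀ x ∈ closedNbhd G u, ∀ y ∈ closedNbhd G u, x ≠ y → G.Adj x y

/-- `s(G)`, the number of simplicial vertices. -/
noncomputable def simplicialNum {V : Type*} (G : SimpleGraph V) : ℕ :=
  {u | IsSimplicial G u}.ncard

/-- `u` is maximally distant from `v`. -/
def MaxDistant {V : Type*} (G : SimpleGraph V) (u v : V) : Prop :=
  ∀ w, G.Adj u w → G.dist v w ≤ G.dist v u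

/-- `u` and `v` are mutually maximally distant. -/
def MMD {V : Type*} (G : SimpleGraph V) (u v : V) : Prop :=
  MaxDistant G u v ∧ MaxDistant G v u

/-- `b(G)`, the number of boundary vertices (vertices MMD with some vertex). -/
noncomputable def boundaryNum {V : Type*} (G : SimpleGraph V) : ℕ :=
  {u | ∃ v, MMD G u v}.ncard

/-- `u` and `v` are true twins: distinct with equal closed neighborhoods. -/
def TrueTwins {V : Type*} (G : SimpleGraph V) (u v : V) : Prop :=
  u ≠ v ∧ closedNbhd G u = closedNbhd G v

/-- The independence number of `G`. -/
noncomputable def indepNum {V : Type*} (G : SimpleGraph V) : ℕ :=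
  sSup {n | ∃ S : Set V, (∀ u ∈ S, ∀ v ∈ S, u ≠ v → ¬ G.Adj u v) ∧ S.ncard = n}

/-- The `k`-independence number `α_k(G)`. -/
noncomputable def kIndepNum {V : Type*} (G : SimpleGraph V) (k : ℕ) : ℕ :=
  sSup {n | ∃ S : Set V, (∀ u ∈ S, ∀ v ∈ S, u ≠ v → k < G.dist u v) ∧ S.ncard = n}

/-- `G` has diameter `k`. -/
def HasDiam {V : Type*} (G : SimpleGraph V) (k : ℕ) : Prop :=
  (∀ u v, G.dist u v ≤ k) ∧ ∃ u v, G.dist u v = k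

/-- The strong product `G ⊠ H`. -/
def StrongProd {α β : Type*} (G : SimpleGraph α) (H : SimpleGraph β) : SimpleGraph (α × β) where
  Adj x y := (x.1 = y.1 ∧ H.Adj x.2 y.2) ∨ (G.Adj x.1 y.1 ∧ x.2 = y.2) ∨
    (G.Adj x.1 y.1 ∧ H.Adj x.2 y.2)
  symm := ⟨fun x y h => by
    rcases h with ⟨h1, h2⟩ | ⟨h1, h2⟩ | ⟨h1, h2⟩
    · exact Or.inl ⟨h1.symm, h2.symm⟩
    · exact Or.inr (Or.inl ⟨h1.symm, h2.symm⟩)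
    · exact Or.inr (Or.inr ⟨h1.symm, h2.symm⟩)⟩
  loopless := ⟨fun x h => by
    rcases h with ⟨_, h2⟩ | ⟨h1, _⟩ | ⟨h1, _⟩
    · exact H.loopless.irrefl _ h2
    · exact G.loopless.irrefl _ h1
    · exact G.loopless.irrefl _ h1⟩

/-- The lexicographic product `G ∘ H`. -/
def LexProd {α β : Type*} (G : SimpleGraph α) (H : SimpleGraph β) : SimpleGraph (α × β) where
  Adj x y := G.Adj x.1 y.1 ∨ (x.1 = y.1 ∧ H.Adj x.2 y.2)
  symm := ⟨fun x y h => by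
    rcases h with h1 | ⟨h1, h2⟩
    · exact Or.inl h1.symm
    · exact Or.inr ⟨h1.symm, h2.symm⟩⟩
  loopless := ⟨fun x h => by
    rcases h with h1 | ⟨_, h2⟩
    · exact G.loopless.irrefl _ h1
    · exact H.loopless.irrefl _ h2⟩

section Comap

variable {V W : Type*} {G : SimpleGraph V} {G' : SimpleGraph W} (f : G' →g G)

theorem Positionable.comap (hf : Function.Injective f) {X : Set V} {u v : W}
    (hdist : G'.dist u v = G.dist (f u) (f v)) (h : Positionable G X (f u) (f v)) :
    Positionable G' (f ⁻¹' X) u v := by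
  intro p hp w hw hwX
  have hgeod : (p.map f).length = G.dist (f u) (f v) := by
    rw [Walk.length_map, hp, hdist]
  have hfw : f w ∈ (p.map f).support := by
    rw [Walk.support_map]
    exact List.mem_map_of_mem hw
  exact (h _ hgeod _ hfw hwX).imp (@hf w u) (@hf w v)

theorem IsTotalGPSet.comap (hf : Function.Injective f)
    (hdist : ∀ u v, G'.dist u v = G.dist (f u) (f v)) {X : Set V} (hX : IsTotalGPSet G X) :
    IsTotalGPSet G' (f ⁻¹' X) :=
  fun u v => (hX (f u) (f v)).comap f hf (hdist u v)

end Comap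

theorem totalGPSet_inter_isometric_general {V : Type*} (G : SimpleGraph V)
    (H : G.Subgraph) (hiso : ∀ u v : H.verts, H.coe.dist u v = G.dist (u : V) (v : V))
    (X : Set V) (hX : IsTotalGPSet G X) :
    IsTotalGPSet H.coe {x : H.verts | (x : V) ∈ X} :=
  hX.comap H.hom Subtype.val_injective hiso

/-- intersection of a total general position set with an isometric subgraph. -/
theorem totalGPSet_inter_isometric {V : Type*} (G : SimpleGraph V) (hG : G.Connected)
    (H : G.Subgraph) (hiso : ∀ u v : H.verts, H.coe.dist u v = G.dist (u : V) (v : V))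
    (X : Set V) (hX : IsTotalGPSet G X) :
    IsTotalGPSet H.coe {x : H.verts | (x : V) ∈ X} :=
  totalGPSet_inter_isometric_general G H hiso X hX
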